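/- There exists a constant C > 0 such that for every integer n ≥ 1 and every integer k with |k − n/2| < n/4, one has | exp( n(J(k/n) − log 2) ) − exp( −(2k−n)^4/(12 n³) ) · ( 1 − (2k−n)^6/(30 n^5) ) | ≤ C · exp( −(2k−n)^4/(12 n³) ) · ( (2k−n)^8/n^7 + (2k−n)^{12}/n^{10} + (2k−n)^{14}/n^{12} ). -/

import Mathlib

/-!
Put `u = 2k - n` and `x = u / n`, so that `k / n = (1 + x) / 2` and `|x| ≤ 1 / 2`. Then
`J((1 + x) / 2) - log 2 = -(x⁴/12 + x⁶/30 + R x)`, where `R` is the remainder after the degree-6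
Taylor polynomial of the even function `((1 + x) log (1 + x) + (1 - x) log (1 - x)) / 2`.
Since `R'' x = x⁶ / (1 - x²)` and `R 0 = R' 0 = 0`, integrating twice gives `0 ≤ R x ≤ x⁸ / 42`.
With `A = u⁴/(12n³)`, `B = u⁶/(30n⁵)` and `r = n R x ≥ 0`, the exponent equals `-A - B - r`, and
`|e^{-(B + r)} - (1 - B)| ≤ B² + r` (from `1 - t ≤ e^{-t} ≤ 1/(1 + t)`) gives the claim with
`C = 1`, since `B² ≤ u¹²/n¹⁰` and `r ≤ u⁸/n⁷`.
-/

/-- The entropy-like function `I(t) = (t-1) log(1-t) - t log t`. -/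
noncomputable def Ifun (t : ℝ) : ℝ := (t - 1) * Real.log (1 - t) - t * Real.log t

/-- `J(t) = I(t) + (2t-1)²/2`. -/
noncomputable def Jfun (t : ℝ) : ℝ := Ifun t + (2 * t - 1) ^ 2 / 2

open Real Set

noncomputable def entropyRemainder (x : ℝ) : ℝ :=
  ((1 + x) * log (1 + x) + (1 - x) * log (1 - x)) / 2 - x ^ 2 / 2 - x ^ 4 / 12 - x ^ 6 / 30

noncomputable def entropyRemainderDeriv (x : ℝ) : ℝ :=
  (log (1 + x) - log (1 - x)) / 2 - x - x ^ 3 / 3 - x ^ 5 / 5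

lemma mul_log_div_two (a : ℝ) : a * log (a / 2) = a * log a - a * log 2 := by
  rcases eq_or_ne a 0 with rfl | ha
  · simp
  · rw [log_div ha two_ne_zero, mul_sub]

lemma Jfun_one_add_div_two_sub_log_two (x : ℝ) :
    Jfun ((1 + x) / 2) - log 2 = -(x ^ 4 / 12 + x ^ 6 / 30 + entropyRemainder x) := by
  unfold Jfun Ifun entropyRemainder
  rw [show (1 : ℝ) - (1 + x) / 2 = (1 - x) / 2 by ring]
  linear_combination (-1/2 : ℝ) * mul_log_div_two (1 - x) - (1/2 : ℝ) * mul_log_div_two (1 + x)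

lemma hasDerivAt_entropyRemainderDeriv {x : ℝ} (hp : 1 + x ≠ 0) (hm : 1 - x ≠ 0) :
    HasDerivAt entropyRemainderDeriv (x ^ 6 / (1 - x ^ 2)) x := by
  have d := (((((hasDerivAt_id x).const_add 1).log hp).sub (((hasDerivAt_id x).const_sub 1).log hm)
    ).div_const 2 |>.sub (hasDerivAt_id x) |>.sub ((hasDerivAt_pow 3 x).div_const 3)
    |>.sub ((hasDerivAt_pow 5 x).div_const 5))
  refine d.congr_deriv ?_
  have hq : 1 - x ^ 2 ≠ 0 := by rw [← one_pow 2, sq_sub_sq]; exact mul_ne_zero hp hm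
  simp only [id]
  field_simp
  ring

lemma hasDerivAt_entropyRemainder {x : ℝ} (hp : 1 + x ≠ 0) (hm : 1 - x ≠ 0) :
    HasDerivAt entropyRemainder (entropyRemainderDeriv x) x := by
  have d := ((((hasDerivAt_mul_log hp).comp_const_add 1 x).add
    ((hasDerivAt_mul_log hm).comp_const_sub 1 x)).div_const 2 |>.sub
    ((hasDerivAt_pow 2 x).div_const 2) |>.sub ((hasDerivAt_pow 4 x).div_const 12)
    |>.sub ((hasDerivAt_pow 6 x).div_const 30))
  refine d.congr_deriv ?_
  unfold entropyRemainderDeriv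
  push_cast
  ring

lemma image_le_of_hasDerivAt_le {f f' g g' : ℝ → ℝ} {a b : ℝ}
    (hf : ∀ x ∈ Icc a b, HasDerivAt f (f' x) x) (hg : ∀ x ∈ Icc a b, HasDerivAt g (g' x) x)
    (ha : f a ≤ g a) (hle : ∀ x ∈ Ico a b, f' x ≤ g' x) : ∀ x ∈ Icc a b, f x ≤ g x :=
  image_le_of_deriv_right_le_deriv_boundary
    (fun x hx ↦ (hf x hx).continuousAt.continuousWithinAt)
    (fun x hx ↦ (hf x (Ico_subset_Icc_self hx)).hasDerivWithinAt) ha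
    (fun x hx ↦ (hg x hx).continuousAt.continuousWithinAt)
    (fun x hx ↦ (hg x (Ico_subset_Icc_self hx)).hasDerivWithinAt) hle

lemma entropyRemainderDeriv_mem_Icc {x : ℝ} (hx : x ∈ Icc (0 : ℝ) (1 / 2)) :
    entropyRemainderDeriv x ∈ Icc 0 (4 * x ^ 7 / 21) := by
  have hderiv : ∀ y ∈ Icc (0 : ℝ) (1 / 2),
      HasDerivAt entropyRemainderDeriv (y ^ 6 / (1 - y ^ 2)) y :=
    fun y hy ↦ hasDerivAt_entropyRemainderDeriv (by linarith [hy.1]) (by linarith [hy.2])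
  have hzero : entropyRemainderDeriv 0 = 0 := by simp [entropyRemainderDeriv]
  constructor
  · refine image_le_of_hasDerivAt_le (fun y _ ↦ hasDerivAt_const y 0) hderiv
      hzero.ge (fun y hy ↦ ?_) x hx
    have : 0 < 1 - y ^ 2 := by nlinarith [hy.1, hy.2]
    positivity
  · refine image_le_of_hasDerivAt_le hderiv (fun y _ ↦ by
      simpa using ((hasDerivAt_pow 7 y).const_mul 4).div_const 21)
      (by simp [hzero]) (fun y hy ↦ ?_) x hx
    -- `y ^ 6 / (1 - y ^ 2) ≤ 4 * y ^ 6 / 3` because `y ^ 2 ≤ 1 / 4`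
    rw [div_le_iff₀ (by nlinarith [hy.1, hy.2])]
    have hy2 : 0 ≤ 1 / 4 - y ^ 2 := by nlinarith [hy.1, hy.2]
    nlinarith [mul_nonneg (pow_nonneg hy.1 6) hy2]

lemma entropyRemainder_mem_Icc {x : ℝ} (hx : x ∈ Icc (0 : ℝ) (1 / 2)) :
    entropyRemainder x ∈ Icc 0 (x ^ 8 / 42) := by
  have hderiv : ∀ y ∈ Icc (0 : ℝ) (1 / 2),
      HasDerivAt entropyRemainder (entropyRemainderDeriv y) y :=
    fun y hy ↦ hasDerivAt_entropyRemainder (by linarith [hy.1]) (by linarith [hy.2])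
  have hzero : entropyRemainder 0 = 0 := by simp [entropyRemainder]
  constructor
  · exact image_le_of_hasDerivAt_le (fun y _ ↦ hasDerivAt_const y 0) hderiv hzero.ge
      (fun y hy ↦ (entropyRemainderDeriv_mem_Icc (Ico_subset_Icc_self hy)).1) x hx
  · refine image_le_of_hasDerivAt_le hderiv (fun y _ ↦ by
      simpa using (hasDerivAt_pow 8 y).div_const 42)
      (by simp [hzero]) (fun y hy ↦ ?_) x hx
    linarith [(entropyRemainderDeriv_mem_Icc (Ico_subset_Icc_self hy)).2]

lemma entropyRemainder_neg (x : ℝ) : entropyRemainder (-x) = entropyRemainder x := by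
  unfold entropyRemainder
  rw [sub_neg_eq_add, ← sub_eq_add_neg]
  ring

lemma entropyRemainder_mem_Icc_of_abs_le {x : ℝ} (hx : |x| ≤ 1 / 2) :
    entropyRemainder x ∈ Icc 0 (x ^ 8 / 42) := by
  rcases le_total 0 x with h | h
  · exact entropyRemainder_mem_Icc ⟨h, by rwa [abs_of_nonneg h] at hx⟩
  · rw [← entropyRemainder_neg, ← Even.neg_pow (by decide)]
    exact entropyRemainder_mem_Icc ⟨by linarith, by rwa [abs_of_nonpos h] at hx⟩

lemma abs_exp_neg_add_sub_one_sub_le {B r : ℝ} (hB : 0 ≤ B) (hr : 0 ≤ r) :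
    |exp (-(B + r)) - (1 - B)| ≤ B ^ 2 + r := by
  have hlower : 1 - (B + r) ≤ exp (-(B + r)) := by linarith [add_one_le_exp (-(B + r))]
  have hupper : exp (-(B + r)) ≤ 1 - B + B ^ 2 :=
    calc exp (-(B + r)) ≤ exp (-B) := exp_le_exp.2 (by linarith)
      _ = (exp B)⁻¹ := exp_neg B
      _ ≤ (1 + B)⁻¹ := inv_anti₀ (by positivity) (by linarith [add_one_le_exp B])
      _ ≤ 1 - B + B ^ 2 := by
        rw [inv_le_iff_one_le_mul₀ (by positivity)]
        nlinarith [pow_nonneg hB 3]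
  rw [abs_le]
  constructor <;> nlinarith

lemma abs_exp_neg_sub_sub_sub_exp_mul_le (A : ℝ) {B r : ℝ} (hB : 0 ≤ B) (hr : 0 ≤ r) :
    |exp (-A - B - r) - exp (-A) * (1 - B)| ≤ exp (-A) * (B ^ 2 + r) := by
  rw [show -A - B - r = -A + -(B + r) by ring, exp_add, ← mul_sub, abs_mul, abs_of_pos (exp_pos _)]
  exact mul_le_mul_of_nonneg_left (abs_exp_neg_add_sub_one_sub_le hB hr) (exp_pos _).le

lemma mul_Jfun_one_add_div_div_two_sub_log_two {n : ℝ} (hn : n ≠ 0) (u : ℝ) :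
    n * (Jfun ((1 + u / n) / 2) - log 2) =
      -(u ^ 4 / (12 * n ^ 3)) - u ^ 6 / (30 * n ^ 5) - n * entropyRemainder (u / n) := by
  rw [Jfun_one_add_div_two_sub_log_two]
  field_simp
  ring

theorem exp_nJ_expansion :
    ∃ C : ℝ, 0 < C ∧ ∀ n : ℕ, 1 ≤ n → ∀ k : ℕ, |(k : ℝ) - n / 2| < (n : ℝ) / 4 →
      |Real.exp (n * (Jfun ((k : ℝ) / n) - Real.log 2)) -
          Real.exp (-(2 * (k : ℝ) - n) ^ 4 / (12 * (n : ℝ) ^ 3)) *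
            (1 - (2 * (k : ℝ) - n) ^ 6 / (30 * (n : ℝ) ^ 5))| ≤
        C * Real.exp (-(2 * (k : ℝ) - n) ^ 4 / (12 * (n : ℝ) ^ 3)) *
          ((2 * (k : ℝ) - n) ^ 8 / (n : ℝ) ^ 7 + (2 * (k : ℝ) - n) ^ 12 / (n : ℝ) ^ 10 +
            (2 * (k : ℝ) - n) ^ 14 / (n : ℝ) ^ 12) := by
  refine ⟨1, one_pos, fun n hn k hk ↦ ?_⟩
  have hn0 : (0 : ℝ) < n := by exact_mod_cast hn
  set u : ℝ := 2 * k - n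
  have hkn : (k : ℝ) / n = (1 + u / n) / 2 := by field_simp; ring
  have hu : |u / n| ≤ 1 / 2 := by
    rw [abs_div, abs_of_pos hn0, div_le_iff₀ hn0, show u = 2 * (k - n / 2) by ring, abs_mul,
      abs_two]
    linarith
  obtain ⟨hR₀, hR⟩ := entropyRemainder_mem_Icc_of_abs_le hu
  rw [hkn, mul_Jfun_one_add_div_div_two_sub_log_two hn0.ne', neg_div, one_mul]
  refine (abs_exp_neg_sub_sub_sub_exp_mul_le _ (by positivity) (mul_nonneg hn0.le hR₀)).trans ?_
  refine mul_le_mul_of_nonneg_left ?_ (exp_pos _).le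
  have hB : (u ^ 6 / (30 * n ^ 5)) ^ 2 ≤ u ^ 12 / n ^ 10 :=
    calc (u ^ 6 / (30 * n ^ 5)) ^ 2 = u ^ 12 / n ^ 10 / 900 := by field_simp; ring
      _ ≤ u ^ 12 / n ^ 10 := div_le_self (by positivity) (by norm_num)
  have hr : n * entropyRemainder (u / n) ≤ u ^ 8 / n ^ 7 :=
    calc n * entropyRemainder (u / n) ≤ n * ((u / n) ^ 8 / 42) := by gcongr
      _ = u ^ 8 / n ^ 7 / 42 := by field_simp
      _ ≤ u ^ 8 / n ^ 7 := div_le_self (by positivity) (by norm_num)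
  have : 0 ≤ u ^ 14 / n ^ 12 := by positivity
  linarith
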